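/- arXiv:1906.08559 — 5 statements merged into one kernel-verified Lean document; each statement's English description precedes it below -/
import Mathlib

section
/- Let A be a bounded linear operator on a complex Hilbert space H and x, y ∈ H. Then |⟨Ax, y⟩| ≤ √(⟨|A|x, x⟩ · ⟨|A*|y, y⟩), where |A| = (A*A)^{1/2} and |A*| = (AA*)^{1/2}. -/
/-!
Write `P = A†A`, `Q = AA†` and `R = P^{1/4} = |A|^{1/2}`. For `ε > 0` the operator
`S = R + ε` is invertible, and `D = A S⁻¹` factors `A = D S`, so
`|⟪A x, y⟫| = |⟪S x, D† y⟫| ≤ (‖R x‖ + ε ‖x‖) ‖D† y‖`.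
Since `A f(P) = f(Q) A` for every continuous `f` (for polynomials this is `A P = Q A`, and
Weierstrass approximation does the rest), `D D† = A S⁻² A† = Q (Q^{1/4} + ε)⁻² ≤ Q^{1/2} = |A†|`.
As `‖R x‖² = ⟪|A| x, x⟫`, letting `ε → 0` gives the inequality. The regularisation by `ε`
replaces the partial isometry of the polar decomposition `A = U |A|`.
-/

open ContinuousLinearMap MeasureTheory

variable {H : Type*} [NormedAddCommGroup H] [InnerProductSpace ℂ H] [CompleteSpace H]

noncomputable def numRadius (A : H →L[ℂ] H) : ℝ :=
  sSup {r : ℝ | ∃ x : H, ‖x‖ = 1 ∧ r = ‖(inner ℂ (A x) x : ℂ)‖}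

/-- The absolute value `|A| = (A*A)^(1/2)` of a bounded operator. -/
noncomputable def opAbs (A : H →L[ℂ] H) : H →L[ℂ] H := CFC.sqrt (adjoint A * A)

open Polynomial Filter Topology
open scoped InnerProductSpace

theorem SemiconjBy.aeval {R A : Type*} [CommSemiring R] [Semiring A] [Algebra R A] {x a b : A}
    (h : SemiconjBy x a b) (p : R[X]) : SemiconjBy x (aeval a p) (aeval b p) := by
  induction p using Polynomial.induction_on with
  | C r => simpa only [aeval_C] using (Algebra.commute_algebraMap_right r x).semiconjBy
  | add p q hp hq => simpa only [map_add] using hp.add_right hq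
  | monomial n r _ =>
    simpa only [map_mul, aeval_C, aeval_X_pow] using
      (Algebra.commute_algebraMap_right r x).semiconjBy.mul_right (h.pow_right (n + 1))

section CStarAlgebra

variable {A : Type*} [CStarAlgebra A]

theorem SemiconjBy.cfc_real {x a b : A} (h : SemiconjBy x a b) (ha : IsSelfAdjoint a)
    (hb : IsSelfAdjoint b) {f : ℝ → ℝ} (hf : Continuous f) :
    SemiconjBy x (cfc f a) (cfc f b) := by
  set s := spectrum ℝ a ∪ spectrum ℝ b
  have hs : s ⊆ Set.Icc (sInf s) (sSup s) :=
    ((spectrum.isBounded a).union (spectrum.isBounded b)).subset_Icc_sInf_sSup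
  choose p hp using fun n : ℕ =>
    exists_polynomial_near_of_continuousOn _ _ f hf.continuousOn (1 / (n + 1)) n.one_div_pos_of_nat
  have hp_tendsto : TendstoUniformlyOn (fun n t => (p n).eval t) f atTop s := by
    refine Metric.tendstoUniformlyOn_iff.mpr fun ε hε => ?_
    obtain ⟨N, hN⟩ := exists_nat_one_div_lt hε
    filter_upwards [eventually_ge_atTop N] with n hn t ht
    rw [dist_comm, Real.dist_eq]
    exact (hp n t (hs ht)).trans_le <| hN.le.trans' <| Nat.one_div_le_one_div hn
  have hcfc {c : A} (hc : spectrum ℝ c ⊆ s) :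
      Tendsto (fun n => cfc (fun t => (p n).eval t) c) atTop (𝓝 (cfc f c)) :=
    tendsto_cfc_fun (hp_tendsto.mono hc) (.of_forall fun n => (p n).continuousOn)
  have hpoly (n : ℕ) :
      x * cfc (fun t => (p n).eval t) a = cfc (fun t => (p n).eval t) b * x := by
    rw [cfc_polynomial (p n) a, cfc_polynomial (p n) b]
    exact h.aeval (p n)
  refine tendsto_nhds_unique ((hcfc Set.subset_union_left).const_mul x) ?_
  simpa only [hpoly] using (hcfc Set.subset_union_right).mul_const x

theorem mul_cfc_star_mul_self_mul_star (a : A) {f : ℝ → ℝ} (hf : Continuous f) :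
    a * cfc f (star a * a) * star a = cfc (fun t => f t * t) (a * star a) := by
  have h : SemiconjBy a (star a * a) (a * star a) := (mul_assoc a (star a) a).symm
  rw [h.cfc_real (.star_mul_self a) (.mul_star_self a) hf, mul_assoc,
    cfc_mul f (fun t => t) (a * star a), cfc_id' ℝ (a * star a)]

theorem cfc_sqrt_sqrt_mul_self [PartialOrder A] [StarOrderedRing A] {a : A} (ha : 0 ≤ a) :
    cfc (fun t => √√t) a * cfc (fun t => √√t) a = CFC.sqrt a := by
  rw [← cfc_mul .., CFC.sqrt_eq_real_sqrt a, cfcₙ_eq_cfc]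
  exact cfc_congr fun t _ => Real.mul_self_sqrt (Real.sqrt_nonneg t)

end CStarAlgebra

theorem Real.inv_mul_inv_mul_le_sqrt {t ε : ℝ} (ht : 0 ≤ t) (hε : 0 ≤ ε) :
    (√√t + ε)⁻¹ * (√√t + ε)⁻¹ * t ≤ √t := by
  have hroot : √√t * √√t = √t := Real.mul_self_sqrt (Real.sqrt_nonneg t)
  rcases (add_nonneg (Real.sqrt_nonneg √t) hε).eq_or_lt with h | h
  · simp [← h, Real.sqrt_nonneg]
  · rw [← mul_inv, inv_mul_eq_div, div_le_iff₀ (by positivity)]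
    calc t = √t * √t := (Real.mul_self_sqrt ht).symm
      _ ≤ √t * ((√√t + ε) * (√√t + ε)) := by
        gcongr
        exact hroot.symm.le.trans <|
          mul_self_le_mul_self (Real.sqrt_nonneg _) (le_add_of_nonneg_right hε)

theorem Real.continuous_inv_sqrt_sqrt_add {ε : ℝ} (hε : 0 < ε) :
    Continuous fun t => (√√t + ε)⁻¹ :=
  (Real.continuous_sqrt.comp Real.continuous_sqrt |>.add continuous_const).inv₀
    fun _ => (add_pos_of_nonneg_of_pos (Real.sqrt_nonneg _) hε).ne'

theorem ContinuousLinearMap.re_inner_le_re_inner_of_le {𝕜 E : Type*} [RCLike 𝕜]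
    [NormedAddCommGroup E] [InnerProductSpace 𝕜 E] {S T : E →L[𝕜] E} (h : S ≤ T) (x : E) :
    RCLike.re ⟪S x, x⟫_𝕜 ≤ RCLike.re ⟪T x, x⟫_𝕜 := by
  simpa only [sub_apply, inner_sub_left, map_sub, sub_nonneg] using h.re_inner_nonneg_left x

theorem norm_adjoint_mul_cfc_inv_apply_le (A : H →L[ℂ] H) {ε : ℝ} (hε : 0 < ε) (y : H) :
    ‖adjoint (A * cfc (fun t => (√√t + ε)⁻¹) (adjoint A * A)) y‖ ≤
      √(⟪opAbs (adjoint A) y, y⟫_ℂ).re := by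
  set g : ℝ → ℝ := fun t => (√√t + ε)⁻¹
  have hg : Continuous g := Real.continuous_inv_sqrt_sqrt_add hε
  set T := cfc g (adjoint A * A)
  have hT : adjoint T = T := (cfc_predicate g _ : IsSelfAdjoint T).adjoint_eq
  have hDD : A * T * adjoint (A * T) = cfc (fun t => g t * g t * t) (A * adjoint A) := by
    have h := mul_cfc_star_mul_self_mul_star A (f := fun t => g t * g t) (hg.mul hg)
    rw [star_eq_adjoint, cfc_mul g g] at h
    have hadj : adjoint (A * T) = T * adjoint A :=
      (adjoint_comp A T).trans (congrArg (· ∘L adjoint A) hT)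
    rw [← h, hadj]
    noncomm_ring
  have hQ : 0 ≤ A * adjoint A := by rw [← star_eq_adjoint]; exact mul_star_self_nonneg A
  have hle : cfc (fun t => g t * g t * t) (A * adjoint A) ≤ opAbs (adjoint A) := by
    rw [opAbs, adjoint_adjoint, CFC.sqrt_eq_real_sqrt _ hQ, cfcₙ_eq_cfc]
    refine cfc_mono (hf := ((hg.mul hg).mul continuous_id).continuousOn) fun t ht => ?_
    exact Real.inv_mul_inv_mul_le_sqrt (spectrum_nonneg_of_nonneg hQ ht) hε.le
  rw [apply_norm_eq_sqrt_inner_adjoint_left, adjoint_adjoint, ← mul_def, hDD]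
  exact Real.sqrt_le_sqrt (re_inner_le_re_inner_of_le hle y)

theorem norm_inner_apply_le_add (A : H →L[ℂ] H) (x y : H) {ε : ℝ} (hε : 0 < ε) :
    ‖⟪A x, y⟫_ℂ‖ ≤ (‖cfc (fun t => √√t) (adjoint A * A) x‖ + ε * ‖x‖) *
      √(⟪opAbs (adjoint A) y, y⟫_ℂ).re := by
  set P := adjoint A * A
  have hP : IsSelfAdjoint P := by
    simpa only [star_eq_adjoint] using IsSelfAdjoint.star_mul_self A
  have hpos (t : ℝ) : 0 < √√t + ε := add_pos_of_nonneg_of_pos (Real.sqrt_nonneg _) hε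
  set S := cfc (fun t => √√t + ε) P
  set D := A * cfc (fun t => (√√t + ε)⁻¹) P
  have hA : D * S = A := by
    rw [mul_assoc, ← cfc_mul _ _ P (Real.continuous_inv_sqrt_sqrt_add hε).continuousOn,
      cfc_congr fun t _ => inv_mul_cancel₀ (hpos t).ne', cfc_const_one ℝ P, mul_one]
  have hS : S x = cfc (fun t => √√t) P x + ε • x := by
    rw [show S = _ from cfc_add_const ε _ P, add_apply, ContinuousLinearMap.algebraMap_apply]
  calc ‖⟪A x, y⟫_ℂ‖ = ‖⟪S x, adjoint D y⟫_ℂ‖ := by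
        rw [← hA, adjoint_inner_right]; rfl
    _ ≤ ‖S x‖ * ‖adjoint D y‖ := norm_inner_le_norm _ _
    _ ≤ _ := by
        gcongr
        · rw [hS, ← norm_smul_of_nonneg hε.le]
          exact norm_add_le _ _
        · exact norm_adjoint_mul_cfc_inv_apply_le A hε y

/-- Mixed Schwarz inequality of Kittaneh. -/
theorem mixed_schwarz (A : H →L[ℂ] H) (x y : H) :
    ‖(inner ℂ (A x) y : ℂ)‖ ≤
      Real.sqrt ((inner ℂ (opAbs A x) x : ℂ).re * (inner ℂ (opAbs (adjoint A) y) y : ℂ).re) := by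
  set R := cfc (fun t => √√t) (adjoint A * A)
  set c := √(⟪opAbs (adjoint A) y, y⟫_ℂ).re
  have hR : ‖R x‖ ^ 2 = (⟪opAbs A x, x⟫_ℂ).re := by
    have hP : 0 ≤ adjoint A * A := by rw [← star_eq_adjoint]; exact star_mul_self_nonneg A
    rw [apply_norm_sq_eq_inner_adjoint_left, ← mul_def,
      (cfc_predicate _ _ : IsSelfAdjoint R).adjoint_eq, cfc_sqrt_sqrt_mul_self hP, opAbs,
      RCLike.re_to_complex]
  rw [← hR, Real.sqrt_mul (sq_nonneg _), Real.sqrt_sq (norm_nonneg _)]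
  have hlim : Tendsto (fun ε => (‖R x‖ + ε * ‖x‖) * c) (𝓝[>] 0) (𝓝 (‖R x‖ * c)) :=
    (Continuous.tendsto' (by fun_prop) 0 _ (by simp)).mono_left nhdsWithin_le_nhds
  exact ge_of_tendsto hlim <|
    eventually_nhdsWithin_of_forall fun ε hε => norm_inner_apply_le_add A x y hε
end

section
/- Let A be a bounded operator on a complex Hilbert space. Then w(A)² ≤ (1/2)‖ |A|² + |A*|² ‖, where w(A) is the numerical radius. -/
open ContinuousLinearMap MeasureTheory

variable {H : Type*} [NormedAddCommGroup H] [InnerProductSpace ℂ H] [CompleteSpace H]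

/-- Kittaneh's inequality: `w(A)² ≤ (1/2)‖|A|² + |A*|²‖`. -/
theorem kittaneh_ineq (A : H →L[ℂ] H) :
    numRadius A ^ 2 ≤ (1 / 2 : ℝ) * ‖adjoint A * A + A * adjoint A‖ := by
  set N : H →L[ℂ] H := adjoint A * A + A * adjoint A with hN
  have hhalf : (0:ℝ) ≤ (1/2 : ℝ) * ‖N‖ := by positivity
  set c : ℝ := Real.sqrt ((1/2 : ℝ) * ‖N‖) with hc
  have hc0 : 0 ≤ c := Real.sqrt_nonneg _
  have hcsq : c ^ 2 = (1/2 : ℝ) * ‖N‖ := Real.sq_sqrt hhalf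
  have hnonneg : 0 ≤ numRadius A := by
    apply Real.sSup_nonneg
    rintro r ⟨x, hx, rfl⟩
    exact norm_nonneg _
  have hbound : numRadius A ≤ c := by
    apply Real.sSup_le _ hc0
    rintro r ⟨x, hx, rfl⟩
    have h1 : ‖(inner ℂ (A x) x : ℂ)‖ ≤ ‖A x‖ := by
      calc ‖(inner ℂ (A x) x : ℂ)‖ ≤ ‖A x‖ * ‖x‖ := norm_inner_le_norm _ _
        _ = ‖A x‖ := by rw [hx, mul_one]
    have h2 : ‖(inner ℂ (A x) x : ℂ)‖ ≤ ‖adjoint A x‖ := by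
      have he : (inner ℂ (A x) x : ℂ) = inner ℂ x (adjoint A x) :=
        (adjoint_inner_right A x x).symm
      rw [he]
      calc ‖(inner ℂ x (adjoint A x) : ℂ)‖ ≤ ‖x‖ * ‖adjoint A x‖ := norm_inner_le_norm _ _
        _ = ‖adjoint A x‖ := by rw [hx, one_mul]
    have hAx : (‖A x‖ : ℝ) ^ 2 = Complex.re (inner ℂ ((adjoint A * A) x) x : ℂ) := by
      have : (inner ℂ ((adjoint A * A) x) x : ℂ) = inner ℂ (A x) (A x) := by
        simp [ContinuousLinearMap.mul_apply, adjoint_inner_left]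
      rw [this]
      rw [← @inner_self_eq_norm_sq ℂ]
      rfl
    have hA'x : (‖adjoint A x‖ : ℝ) ^ 2 = Complex.re (inner ℂ ((A * adjoint A) x) x : ℂ) := by
      have : (inner ℂ ((A * adjoint A) x) x : ℂ) = inner ℂ (adjoint A x) (adjoint A x) := by
        rw [ContinuousLinearMap.mul_apply]
        exact (adjoint_inner_right A (adjoint A x) x).symm
      rw [this]
      rw [← @inner_self_eq_norm_sq ℂ]
      rfl
    have hre : Complex.re (inner ℂ (N x) x : ℂ) ≤ ‖N‖ := by
      calc Complex.re (inner ℂ (N x) x : ℂ) ≤ ‖(inner ℂ (N x) x : ℂ)‖ := Complex.re_le_norm _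
        _ ≤ ‖N x‖ * ‖x‖ := norm_inner_le_norm _ _
        _ ≤ ‖N‖ * ‖x‖ * ‖x‖ := by
            have := N.le_opNorm x
            nlinarith [norm_nonneg x, norm_nonneg (N x)]
        _ = ‖N‖ := by rw [hx]; ring
    have hsum : (‖A x‖ : ℝ) ^ 2 + ‖adjoint A x‖ ^ 2 = Complex.re (inner ℂ (N x) x : ℂ) := by
      rw [hAx, hA'x, hN]
      simp [ContinuousLinearMap.add_apply, inner_add_left]
    have hsq : ‖(inner ℂ (A x) x : ℂ)‖ ^ 2 ≤ (1/2 : ℝ) * ‖N‖ := by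
      nlinarith [sq_nonneg (‖A x‖ - ‖adjoint A x‖), norm_nonneg (inner ℂ (A x) x : ℂ),
        mul_le_mul h1 h2 (norm_nonneg _) (norm_nonneg _)]
    have hsq' : ‖(inner ℂ (A x) x : ℂ)‖ ^ 2 ≤ c ^ 2 := by rw [hcsq]; exact hsq
    nlinarith [norm_nonneg (inner ℂ (A x) x : ℂ), hc0]
  calc numRadius A ^ 2 ≤ c ^ 2 := by nlinarith
    _ = (1/2 : ℝ) * ‖N‖ := hcsq
end

section
/- Let Φ : B(H) → B(H) be a unital positive linear map and A a bounded self-adjoint operator. Then Φ(A)² ≤ Φ(A²) in the Loewner order (Kadison's inequality). -/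
open ContinuousLinearMap MeasureTheory

variable {H : Type*} [NormedAddCommGroup H] [InnerProductSpace ℂ H] [CompleteSpace H]

open Polynomial

set_option maxHeartbeats 2000000
set_option synthInstance.maxHeartbeats 400000


lemma smul_sa_clm' (c : ℝ) (T : H →L[ℂ] H) (hT : IsSelfAdjoint T) : IsSelfAdjoint (c • T) := by
  rw [RCLike.real_smul_eq_coe_smul (K := ℂ), IsSelfAdjoint, star_smul, hT.star_eq,
    RCLike.star_def, RCLike.conj_ofReal]

lemma smul_nonneg_clm {c : ℝ} (hc : 0 ≤ c) {T : H →L[ℂ] H} (hT : 0 ≤ T) : 0 ≤ c • T := by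
  rw [RCLike.real_smul_eq_coe_smul (K := ℂ)]
  rw [ContinuousLinearMap.nonneg_iff_isPositive] at hT ⊢
  refine ⟨?_, fun x => ?_⟩
  · rw [← isSelfAdjoint_iff_isSymmetric, IsSelfAdjoint, star_smul, hT.1.isSelfAdjoint.star_eq]
    simp [RCLike.star_def, Complex.conj_ofReal]
  · have := hT.2 x
    rw [ContinuousLinearMap.reApplyInnerSelf] at this ⊢
    simp only [ContinuousLinearMap.smul_apply, inner_smul_left, RCLike.conj_ofReal]
    rw [RCLike.re_ofReal_mul]
    positivity

lemma sq_expand (s t : ℝ) (a : H →L[ℂ] H) :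
    (s • a + t • (1 : H →L[ℂ] H)) ^ 2
      = (s * s) • a ^ 2 + (2 * s * t) • a + (t * t) • (1 : H →L[ℂ] H) := by
  simp only [sq, add_mul, mul_add, smul_mul_smul_comm, mul_one, one_mul]
  module


lemma jensen_key {ι : Type*} (s : Finset ι) (lam : ι → ℝ) (Q : ι → H →L[ℂ] H)
    (hQ : ∀ i ∈ s, 0 ≤ Q i) (hsum : ∑ i ∈ s, Q i = 1) :
    (∑ i ∈ s, lam i • Q i) ^ 2 ≤ ∑ i ∈ s, lam i ^ 2 • Q i := by
  have hQsa : ∀ i ∈ s, IsSelfAdjoint (Q i) := fun i hi => .of_nonneg (hQ i hi)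
  set B := ∑ i ∈ s, lam i • Q i with hB
  set C := ∑ i ∈ s, lam i ^ 2 • Q i with hC
  have hBsa : IsSelfAdjoint B := by
    rw [hB, IsSelfAdjoint, star_sum]
    exact Finset.sum_congr rfl fun i hi => (smul_sa_clm' _ _ (hQsa i hi)).star_eq
  have hCsa : IsSelfAdjoint C := by
    rw [hC, IsSelfAdjoint, star_sum]
    exact Finset.sum_congr rfl fun i hi => (smul_sa_clm' _ _ (hQsa i hi)).star_eq
  -- square roots
  set R : ι → H →L[ℂ] H := fun i => CFC.sqrt (Q i) with hR
  have hRsq : ∀ i ∈ s, R i * R i = Q i := by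
    intro i hi
    have := CFC.sq_sqrt (Q i) (hQ i hi)
    rwa [sq] at this
  have hRsym : ∀ i ∈ s, ∀ u v : H, (inner ℂ (R i u) v : ℂ) = inner ℂ u (R i v) := by
    intro i hi
    exact isSelfAdjoint_iff_isSymmetric.mp (IsSelfAdjoint.of_nonneg (CFC.sqrt_nonneg (Q i)))
  have hQinner : ∀ i ∈ s, ∀ u v : H, (inner ℂ (Q i u) v : ℂ) = inner ℂ (R i u) (R i v) := by
    intro i hi u v
    rw [← hRsq i hi, ContinuousLinearMap.mul_apply, hRsym i hi]
  have hQre : ∀ i ∈ s, ∀ u : H, RCLike.re (inner ℂ (Q i u) u : ℂ) = ‖R i u‖ ^ 2 := by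
    intro i hi u
    rw [hQinner i hi u u, inner_self_eq_norm_sq]
  have hBsym : ∀ u v : H, (inner ℂ (B u) v : ℂ) = inner ℂ u (B v) :=
    isSelfAdjoint_iff_isSymmetric.mp hBsa
  rw [← sub_nonneg, ContinuousLinearMap.nonneg_iff_isPositive]
  refine ⟨isSelfAdjoint_iff_isSymmetric.mp (hCsa.sub (hBsa.pow 2)), fun x => ?_⟩
  rw [ContinuousLinearMap.reApplyInnerSelf, ContinuousLinearMap.sub_apply, inner_sub_left, map_sub,
    sub_nonneg]
  -- re ⟪B² x, x⟫ = ‖B x‖²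
  have re_mul : ∀ (c : ℝ) (z : ℂ), RCLike.re ((c:ℂ) * z) = c * RCLike.re z := by
    intro c z; simp [Complex.mul_re]
  have hB2 : RCLike.re (inner ℂ ((B ^ 2) x) x : ℂ) = ‖B x‖ ^ 2 := by
    rw [sq, ContinuousLinearMap.mul_apply, hBsym (B x) x, inner_self_eq_norm_sq]
  rw [hB2]
  -- re ⟪C x, x⟫ = ∑ lam i ^ 2 * ‖R i x‖ ^ 2
  have smul_inner : ∀ (c : ℝ) (T : H →L[ℂ] H) (u v : H),
      (inner ℂ ((c • T) u) v : ℂ) = (c : ℂ) * inner ℂ (T u) v := by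
    intro c T u v
    rw [RCLike.real_smul_eq_coe_smul (K := ℂ), ContinuousLinearMap.smul_apply, inner_smul_left,
      RCLike.conj_ofReal]
    rfl
  have hCre : RCLike.re (inner ℂ (C x) x : ℂ) = ∑ i ∈ s, lam i ^ 2 * ‖R i x‖ ^ 2 := by
    rw [hC, ContinuousLinearMap.sum_apply, sum_inner, map_sum]
    refine Finset.sum_congr rfl fun i hi => ?_
    rw [smul_inner, re_mul, hQre i hi]
  rw [hCre]
  -- main estimate
  set y := B x with hy
  have h1 : ‖y‖ ^ 2 = RCLike.re (inner ℂ (B x) y : ℂ) := by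
    rw [← hy, inner_self_eq_norm_sq]
  have h2 : RCLike.re (inner ℂ (B x) y : ℂ) = ∑ i ∈ s, lam i * RCLike.re (inner ℂ (Q i x) y : ℂ) := by
    rw [hB, ContinuousLinearMap.sum_apply, sum_inner, map_sum]
    refine Finset.sum_congr rfl fun i hi => ?_
    rw [smul_inner, re_mul]
  have h3 : ∀ i ∈ s, lam i * RCLike.re (inner ℂ (Q i x) y : ℂ)
      ≤ |lam i| * (‖R i x‖ * ‖R i y‖) := by
    intro i hi
    rw [hQinner i hi]
    calc lam i * RCLike.re (inner ℂ (R i x) (R i y) : ℂ)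
        ≤ |lam i * RCLike.re (inner ℂ (R i x) (R i y) : ℂ)| := le_abs_self _
      _ = |lam i| * |RCLike.re (inner ℂ (R i x) (R i y) : ℂ)| := abs_mul _ _
      _ ≤ |lam i| * ‖(inner ℂ (R i x) (R i y) : ℂ)‖ := by
          exact mul_le_mul_of_nonneg_left (RCLike.abs_re_le_norm _) (abs_nonneg _)
      _ ≤ |lam i| * (‖R i x‖ * ‖R i y‖) := by
          exact mul_le_mul_of_nonneg_left (norm_inner_le_norm _ _) (abs_nonneg _)
  have hyS : ‖y‖ ^ 2 ≤ ∑ i ∈ s, |lam i| * (‖R i x‖ * ‖R i y‖) := by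
    rw [h1, h2]; exact Finset.sum_le_sum h3
  have hCS : (∑ i ∈ s, |lam i| * (‖R i x‖ * ‖R i y‖)) ^ 2
      ≤ (∑ i ∈ s, lam i ^ 2 * ‖R i x‖ ^ 2) * ∑ i ∈ s, ‖R i y‖ ^ 2 := by
    have := Finset.sum_mul_sq_le_sq_mul_sq s (fun i => |lam i| * ‖R i x‖) (fun i => ‖R i y‖)
    simp only [mul_pow, sq_abs, mul_assoc] at this ⊢
    exact this
  have hRy : ∑ i ∈ s, ‖R i y‖ ^ 2 = ‖y‖ ^ 2 := by
    have : ∑ i ∈ s, ‖R i y‖ ^ 2 = RCLike.re (inner ℂ ((∑ i ∈ s, Q i) y) y : ℂ) := by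
      rw [ContinuousLinearMap.sum_apply, sum_inner, map_sum]
      exact Finset.sum_congr rfl fun i hi => (hQre i hi y).symm
    rw [this, hsum, ContinuousLinearMap.one_apply, inner_self_eq_norm_sq]
  have hK : 0 ≤ ∑ i ∈ s, lam i ^ 2 * ‖R i x‖ ^ 2 :=
    Finset.sum_nonneg fun i _ => by positivity
  rcases eq_or_lt_of_le (norm_nonneg y) with hy0 | hy0
  · rw [← hy0]; simpa using hK
  · have h4 : (‖y‖ ^ 2) ^ 2 ≤ (∑ i ∈ s, lam i ^ 2 * ‖R i x‖ ^ 2) * ‖y‖ ^ 2 := by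
      calc (‖y‖ ^ 2) ^ 2 ≤ (∑ i ∈ s, |lam i| * (‖R i x‖ * ‖R i y‖)) ^ 2 := by
            exact pow_le_pow_left₀ (by positivity) hyS 2
        _ ≤ _ := by rw [← hRy]; exact hCS
    exact le_of_mul_le_mul_right (by nlinarith [h4]) (by positivity : (0:ℝ) < ‖y‖ ^ 2)

lemma le_of_forall_nat_clm (x y : H →L[ℂ] H)
    (h : ∀ n : ℕ, x ≤ y + ((n : ℝ) + 1)⁻¹ • 1) : x ≤ y
 := by
  have h0 := (ContinuousLinearMap.le_def _ _).mp (h 0)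
  rw [ContinuousLinearMap.le_def]
  have hsa : IsSelfAdjoint (y - x) := by
    have : y - x = (y + ((0:ℕ) + 1 : ℝ)⁻¹ • (1 : H →L[ℂ] H) - x)
        - ((0:ℕ) + 1 : ℝ)⁻¹ • (1 : H →L[ℂ] H) := by abel
    rw [this]
    exact h0.1.isSelfAdjoint.sub (smul_sa_clm' _ _ (.one _))
  refine ⟨isSelfAdjoint_iff_isSymmetric.mp hsa, fun v => ?_⟩
  have key : ∀ n : ℕ, -(((n : ℝ) + 1)⁻¹ * ‖v‖ ^ 2) ≤ (y - x).reApplyInnerSelf v := by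
    intro n
    have hn := ((ContinuousLinearMap.le_def _ _).mp (h n)).2 v
    rw [ContinuousLinearMap.reApplyInnerSelf] at hn ⊢
    have expand : (y + ((n : ℝ) + 1)⁻¹ • (1 : H →L[ℂ] H) - x) v
        = (y - x) v + ((n : ℝ) + 1)⁻¹ • v := by
      simp only [ContinuousLinearMap.sub_apply, ContinuousLinearMap.add_apply,
        ContinuousLinearMap.smul_apply, ContinuousLinearMap.one_apply]
      abel
    rw [expand, inner_add_left, map_add] at hn
    have re_mul : ∀ (c : ℝ) (z : ℂ), RCLike.re ((c:ℂ) * z) = c * RCLike.re z := by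
      intro c z; simp [Complex.mul_re]
    have : RCLike.re (inner ℂ (((n : ℝ) + 1)⁻¹ • v) v : ℂ) = ((n : ℝ) + 1)⁻¹ * ‖v‖ ^ 2 := by
      rw [RCLike.real_smul_eq_coe_smul (K := ℂ), inner_smul_left, RCLike.conj_ofReal,
        RCLike.re_ofReal_mul, inner_self_eq_norm_sq]
    rw [this] at hn
    linarith
  have hlim : Filter.Tendsto (fun n : ℕ => -(((n : ℝ) + 1)⁻¹ * ‖v‖ ^ 2)) Filter.atTop
      (nhds 0) := by
    have := (tendsto_one_div_add_atTop_nhds_zero_nat).mul_const (‖v‖ ^ 2)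
    simpa [one_div] using this.neg
  exact le_of_tendsto' hlim key

lemma bern_sum_one {𝔸 : Type*} [Ring 𝔸] [Algebra ℝ 𝔸] (a : 𝔸) (n : ℕ) :
    ∑ i ∈ Finset.range (n + 1), aeval a (bernsteinPolynomial ℝ n i) = 1 := by
  rw [← map_sum, bernsteinPolynomial.sum, map_one]

lemma bern_sum_id {𝔸 : Type*} [Ring 𝔸] [Algebra ℝ 𝔸] (a : 𝔸) (n : ℕ) (hn : 0 < n) :
    ∑ i ∈ Finset.range (n + 1), ((i : ℝ) / n) • aeval a (bernsteinPolynomial ℝ n i) = a := by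
  have h := congrArg (aeval a) (bernsteinPolynomial.sum_smul (R := ℝ) n)
  rw [map_sum, _root_.map_nsmul, aeval_X] at h
  simp only [map_nsmul] at h
  have : ∀ i : ℕ, ((i : ℝ) / n) • aeval a (bernsteinPolynomial ℝ n i)
      = (n : ℝ)⁻¹ • ((i : ℝ) • aeval a (bernsteinPolynomial ℝ n i)) := by
    intro i; rw [smul_smul, div_eq_inv_mul]
  rw [Finset.sum_congr rfl fun i _ => this i, ← Finset.smul_sum]
  have : ∑ i ∈ Finset.range (n + 1), (i : ℝ) • aeval a (bernsteinPolynomial ℝ n i)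
      = ∑ i ∈ Finset.range (n + 1), i • aeval a (bernsteinPolynomial ℝ n i) := by
    exact Finset.sum_congr rfl fun i _ => Nat.cast_smul_eq_nsmul ℝ i _
  rw [this, h, ← Nat.cast_smul_eq_nsmul ℝ n a, smul_smul,
    inv_mul_cancel₀ (by exact_mod_cast hn.ne' : (n : ℝ) ≠ 0), one_smul]

lemma bern_sum_sq {𝔸 : Type*} [Ring 𝔸] [Algebra ℝ 𝔸] (a : 𝔸) (n : ℕ) (hn : 0 < n) :
    ∑ i ∈ Finset.range (n + 1), ((i : ℝ) / n) ^ 2 • aeval a (bernsteinPolynomial ℝ n i)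
      = a ^ 2 + (n : ℝ)⁻¹ • (a - a ^ 2) := by
  have h2 := congrArg (aeval a) (bernsteinPolynomial.sum_mul_smul (R := ℝ) n)
  rw [map_sum, map_nsmul, map_pow, aeval_X] at h2
  simp only [map_nsmul] at h2
  have h1 := congrArg (aeval a) (bernsteinPolynomial.sum_smul (R := ℝ) n)
  rw [map_sum, _root_.map_nsmul, aeval_X] at h1
  simp only [map_nsmul] at h1
  have hcast : ∀ i : ℕ, ((i : ℝ)) ^ 2 = ((i * (i - 1) : ℕ) : ℝ) + (i : ℝ) := by
    intro i
    cases i with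
    | zero => simp
    | succ k => push_cast [Nat.succ_sub_one]; ring
  have key : ∀ i : ℕ, ((i : ℝ) / n) ^ 2 • aeval a (bernsteinPolynomial ℝ n i)
      = ((n : ℝ)⁻¹ * (n : ℝ)⁻¹) • (((i * (i - 1) : ℕ) • aeval a (bernsteinPolynomial ℝ n i))
          + ((i : ℕ) • aeval a (bernsteinPolynomial ℝ n i))) := by
    intro i
    rw [← Nat.cast_smul_eq_nsmul ℝ (i * (i - 1)), ← Nat.cast_smul_eq_nsmul ℝ i,
      ← add_smul, ← hcast, smul_smul]
    congr 1
    field_simp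
  rw [Finset.sum_congr rfl fun i _ => key i, ← Finset.smul_sum, Finset.sum_add_distrib, h1, h2]
  have hn' : (n : ℝ) ≠ 0 := by exact_mod_cast hn.ne'
  rw [← Nat.cast_smul_eq_nsmul ℝ (n * (n - 1)), ← Nat.cast_smul_eq_nsmul ℝ n a]
  have hcn : ((n * (n - 1) : ℕ) : ℝ) = (n : ℝ) * ((n : ℝ) - 1) := by
    have : (1 : ℕ) ≤ n := hn
    push_cast [Nat.cast_sub this]
    ring
  rw [hcn]
  have e1 : (n : ℝ)⁻¹ * (n : ℝ)⁻¹ * ((n : ℝ) * ((n : ℝ) - 1)) = 1 - (n : ℝ)⁻¹ := by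
    field_simp
  have e2 : (n : ℝ)⁻¹ * (n : ℝ)⁻¹ * (n : ℝ) = (n : ℝ)⁻¹ := by
    field_simp
  rw [smul_add, smul_smul, smul_smul, e1, e2]
  module

/-- Kadison's inequality for `0 ≤ A ≤ 1`. -/
lemma kadison01 (Φ : (H →L[ℂ] H) →ₗ[ℂ] (H →L[ℂ] H))
    (hpos : ∀ T : H →L[ℂ] H, 0 ≤ T → 0 ≤ Φ T) (hunital : Φ 1 = 1)
    (A : H →L[ℂ] H) (h0 : 0 ≤ A) (h1 : A ≤ 1) :
    (Φ A) ^ 2 ≤ Φ (A ^ 2) := by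
  have hA : IsSelfAdjoint A := .of_nonneg h0
  have hmapr : ∀ (r : ℝ) (T : H →L[ℂ] H), Φ (r • T) = r • Φ T := by
    intro r T
    rw [RCLike.real_smul_eq_coe_smul (K := ℂ), _root_.map_smul,
      ← RCLike.real_smul_eq_coe_smul (K := ℂ)]
  apply le_of_forall_nat_clm
  intro m
  set n := m + 1 with hnm
  have hn : 0 < n := Nat.succ_pos m
  set P : ℕ → H →L[ℂ] H := fun i => aeval A (bernsteinPolynomial ℝ n i) with hPdef
  have hP : ∀ i, 0 ≤ P i := by
    intro i
    have heq : P i = cfc (fun t : ℝ => (bernsteinPolynomial ℝ n i).eval t) A :=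
      (cfc_polynomial _ A).symm
    rw [heq]
    apply cfc_nonneg
    intro t ht
    have ht0 : 0 ≤ t := spectrum_nonneg_of_nonneg h0 ht
    have ht1 : t ≤ 1 := (CFC.le_one_iff (R := ℝ) A).mp h1 t ht
    have h1t : (0:ℝ) ≤ 1 - t := by linarith
    simp only [bernsteinPolynomial, Polynomial.eval_mul, Polynomial.eval_pow,
      Polynomial.eval_natCast, Polynomial.eval_sub, Polynomial.eval_one, Polynomial.eval_X]
    have : (0:ℝ) ≤ (n.choose i : ℝ) := by positivity
    exact mul_nonneg (mul_nonneg this (pow_nonneg ht0 _)) (pow_nonneg h1t _)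
  have hQ : ∀ i ∈ Finset.range (n + 1), 0 ≤ Φ (P i) := fun i _ => hpos _ (hP i)
  have hsumQ : ∑ i ∈ Finset.range (n + 1), Φ (P i) = 1 := by
    rw [← map_sum, hPdef]
    rw [bern_sum_one A n, hunital]
  have jensen := jensen_key (Finset.range (n + 1)) (fun i => (i : ℝ) / n)
    (fun i => Φ (P i)) hQ hsumQ
  have hLHS : ∑ i ∈ Finset.range (n + 1), ((i : ℝ) / n) • Φ (P i) = Φ A := by
    have : ∀ i : ℕ, ((i : ℝ) / n) • Φ (P i) = Φ (((i : ℝ) / n) • P i) := fun i => (hmapr _ _).symm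
    rw [Finset.sum_congr rfl fun i _ => this i, ← map_sum, hPdef]
    rw [bern_sum_id A n hn]
  have hRHS : ∑ i ∈ Finset.range (n + 1), ((i : ℝ) / n) ^ 2 • Φ (P i)
      = Φ (A ^ 2) + (n : ℝ)⁻¹ • Φ (A - A ^ 2) := by
    have : ∀ i : ℕ, ((i : ℝ) / n) ^ 2 • Φ (P i) = Φ (((i : ℝ) / n) ^ 2 • P i) :=
      fun i => (hmapr _ _).symm
    rw [Finset.sum_congr rfl fun i _ => this i, ← map_sum, hPdef]
    rw [bern_sum_sq A n hn, map_add, hmapr]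
  rw [hLHS, hRHS] at jensen
  have hbound : (n : ℝ)⁻¹ • Φ (A - A ^ 2) ≤ (n : ℝ)⁻¹ • (1 : H →L[ℂ] H) := by
    rw [← sub_nonneg, ← smul_sub]
    apply smul_nonneg_clm (by positivity)
    have hΦ : Φ (1 - (A - A ^ 2)) = (1 : H →L[ℂ] H) - Φ (A - A ^ 2) := by
      rw [map_sub, hunital]
    rw [← hΦ]
    apply hpos
    have hA2 : 0 ≤ A ^ 2 := by
      rw [sq]
      nth_rewrite 1 [← hA.star_eq]
      exact star_mul_self_nonneg A
    have : (1 : H →L[ℂ] H) - (A - A ^ 2) = (1 - A) + A ^ 2 := by abel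
    rw [this]
    exact add_nonneg (sub_nonneg.2 h1) hA2
  have final : (Φ A) ^ 2 ≤ Φ (A ^ 2) + (n : ℝ)⁻¹ • (1 : H →L[ℂ] H) :=
    jensen.trans (add_le_add_right hbound _)
  have : ((n : ℝ)) = (m : ℝ) + 1 := by rw [hnm]; push_cast; ring
  rwa [this] at final

/-- Kadison's inequality: `Φ(A)² ≤ Φ(A²)`. -/
theorem kadison (Φ : (H →L[ℂ] H) →ₗ[ℂ] (H →L[ℂ] H))
    (hpos : ∀ T : H →L[ℂ] H, 0 ≤ T → 0 ≤ Φ T) (hunital : Φ 1 = 1)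
    (A : H →L[ℂ] H) (hA : IsSelfAdjoint A) :
    (Φ A) ^ 2 ≤ Φ (A ^ 2) := by
  have hmapr : ∀ (r : ℝ) (T : H →L[ℂ] H), Φ (r • T) = r • Φ T := by
    intro r T
    rw [RCLike.real_smul_eq_coe_smul (K := ℂ), _root_.map_smul,
      ← RCLike.real_smul_eq_coe_smul (K := ℂ)]
  set r : ℝ := ‖A‖ with hr
  set c : ℝ := 2 * r + 1 with hcdef
  have hr0 : 0 ≤ r := norm_nonneg A
  have hc : 0 < c := by positivity
  set B : H →L[ℂ] H := c⁻¹ • (A + r • (1 : H →L[ℂ] H)) with hBdef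
  have hA1 : 0 ≤ A + r • (1 : H →L[ℂ] H) := by
    have hneg := hA.neg_algebraMap_norm_le_self
    rw [Algebra.algebraMap_eq_smul_one] at hneg
    have := add_le_add_left hneg (r • (1 : H →L[ℂ] H))
    rw [← hr, neg_add_cancel] at this
    exact this
  have hB0 : 0 ≤ B := smul_nonneg_clm (inv_nonneg.2 hc.le) hA1
  have hone : (0 : H →L[ℂ] H) ≤ 1 := by
    rw [ContinuousLinearMap.nonneg_iff_isPositive]; exact isPositive_one
  have hArle : A + r • (1 : H →L[ℂ] H) ≤ c • 1 := by
    have h1 := hA.le_algebraMap_norm_self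
    rw [Algebra.algebraMap_eq_smul_one] at h1
    calc A + r • (1 : H →L[ℂ] H) ≤ r • 1 + r • 1 := add_le_add_left h1 _
      _ ≤ c • 1 := by
          rw [← sub_nonneg]
          have : c • (1 : H →L[ℂ] H) - (r • 1 + r • 1) = 1 := by
            rw [hcdef]; module
          rw [this]; exact hone
  have hB1 : B ≤ 1 := by
    have h2 : 0 ≤ c⁻¹ • (c • (1 : H →L[ℂ] H) - (A + r • 1)) :=
      smul_nonneg_clm (inv_nonneg.2 hc.le) (sub_nonneg.2 hArle)
    rw [smul_sub, smul_smul, inv_mul_cancel₀ hc.ne', one_smul] at h2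
    rw [← sub_nonneg]
    exact h2
  have hk := kadison01 Φ hpos hunital B hB0 hB1
  have hBform : B = c⁻¹ • A + (c⁻¹ * r) • (1 : H →L[ℂ] H) := by
    rw [hBdef, smul_add, smul_smul]
  have hΦB : Φ B = c⁻¹ • Φ A + (c⁻¹ * r) • (1 : H →L[ℂ] H) := by
    rw [hBform, map_add, hmapr, hmapr, hunital]
  have hΦB2 : Φ (B ^ 2) = (c⁻¹ * c⁻¹) • Φ (A ^ 2) + (2 * c⁻¹ * (c⁻¹ * r)) • Φ A
      + ((c⁻¹ * r) * (c⁻¹ * r)) • (1 : H →L[ℂ] H) := by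
    rw [hBform, sq_expand, map_add, map_add, hmapr, hmapr, hmapr, hunital]
  have hdiff : Φ (B ^ 2) - (Φ B) ^ 2 = (c⁻¹ * c⁻¹) • (Φ (A ^ 2) - (Φ A) ^ 2) := by
    rw [hΦB2, hΦB, sq_expand]
    module
  have h3 : 0 ≤ (c⁻¹ * c⁻¹) • (Φ (A ^ 2) - (Φ A) ^ 2) := by
    rw [← hdiff]; exact sub_nonneg.2 hk
  have h4 := smul_nonneg_clm (mul_nonneg hc.le hc.le) h3
  rw [smul_smul] at h4
  have h5 : c * c * (c⁻¹ * c⁻¹) = 1 := by field_simp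
  rw [h5, one_smul] at h4
  exact sub_nonneg.1 h4
end

section
/- Let Φ : B(H) → B(H) be a unital positive linear map, A a bounded self-adjoint operator with spectrum in an interval J, f convex continuous on J, and x a unit vector. Then f(⟨Φ(A)x, x⟩) ≤ ⟨Φ(f(A))x, x⟩. -/
open ContinuousLinearMap MeasureTheory

variable {H : Type*} [NormedAddCommGroup H] [InnerProductSpace ℂ H] [CompleteSpace H]

/-!
The functional `ω T = re ⟪Φ(T) x, x⟫` is a state. Composed with the continuous functional calculus
of `A` it is a positive functional on `C(σ(A), ℝ)`, so by the Riesz–Markov–Kakutani theorem it is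
integration against a probability measure `μ` on `σ(A)`. Then `ω(A) = ∫ t dμ` and
`ω(f(A)) = ∫ f dμ`, and the inequality is Jensen's inequality for `μ`.
-/

namespace PositiveLinearMap

open CompactlySupported

variable {A : Type*} [CStarAlgebra A] [PartialOrder A] [StarOrderedRing A] (ω : A →ₚ[ℝ] ℝ) {a : A}

-- `C_c` rather than `C` because that is what Riesz–Markov–Kakutani takes; on the compact `σ(a)`
-- the two coincide.
noncomputable def compCfcHom (ha : IsSelfAdjoint a) : C_c(spectrum ℝ a, ℝ) →ₚ[ℝ] ℝ :=
  .mk₀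
    { toFun g := ω (cfcHom ha g.toContinuousMap)
      map_add' g h := by rw [← map_add, ← map_add]; rfl
      map_smul' c g := by rw [RingHom.id_apply, ← map_smul, ← map_smul]; rfl }
    fun _ hg => ω.map_nonneg <| (cfcHom_nonneg_iff ha).mpr hg

noncomputable def spectralMeasure (ha : IsSelfAdjoint a) : Measure (spectrum ℝ a) :=
  RealRMK.rieszMeasure (ω.compCfcHom ha)

theorem integral_spectralMeasure (ha : IsSelfAdjoint a) (g : C(spectrum ℝ a, ℝ)) :
    ∫ t, g t ∂(ω.spectralMeasure ha) = ω (cfcHom ha g) :=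
  RealRMK.integral_rieszMeasure _ (CompactlySupportedContinuousMap.continuousMapEquiv g)

theorem integral_spectralMeasure_eq_cfc (ha : IsSelfAdjoint a) {f : ℝ → ℝ}
    (hf : ContinuousOn f (spectrum ℝ a)) :
    ∫ t, f t ∂(ω.spectralMeasure ha) = ω (cfc f a) := by
  rw [cfc_apply f a ha hf, ← integral_spectralMeasure]
  rfl

theorem isProbabilityMeasure_spectralMeasure (ha : IsSelfAdjoint a) (hω : ω 1 = 1) :
    IsProbabilityMeasure (ω.spectralMeasure ha) := by
  constructor
  have h := ω.integral_spectralMeasure_eq_cfc ha (f := fun _ => 1) continuousOn_const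
  rw [cfc_const_one ℝ a, hω, integral_const, smul_eq_mul, mul_one, measureReal_def] at h
  exact (ENNReal.toReal_eq_one_iff _).mp h

end PositiveLinearMap

theorem ConvexOn.map_apply_le_apply_cfc {A : Type*} [CStarAlgebra A] [PartialOrder A]
    [StarOrderedRing A] {ω : A →ₚ[ℝ] ℝ} (hω : ω 1 = 1) {a : A} (ha : IsSelfAdjoint a)
    {J : Set ℝ} (hspec : spectrum ℝ a ⊆ J) {f : ℝ → ℝ} (hconv : ConvexOn ℝ J f)
    (hcont : ContinuousOn f J) :
    f (ω a) ≤ ω (cfc f a) := by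
  set μ := ω.spectralMeasure ha
  have := ω.isProbabilityMeasure_spectralMeasure ha hω
  obtain ⟨⟨t, ht⟩⟩ := nonempty_of_isProbabilityMeasure μ
  have hK : IsCompact (spectrum ℝ a) := isCompact_iff_compactSpace.mpr inferInstance
  -- Jensen needs a closed convex set; `J` need not be closed, but the hull of `σ(a)` is.
  have hKI : spectrum ℝ a ⊆ Set.Icc (sInf (spectrum ℝ a)) (sSup (spectrum ℝ a)) :=
    hK.isBounded.subset_Icc_sInf_sSup
  have hIJ : Set.Icc (sInf (spectrum ℝ a)) (sSup (spectrum ℝ a)) ⊆ J :=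
    hconv.1.ordConnected.out (hspec (hK.sInf_mem ⟨t, ht⟩)) (hspec (hK.sSup_mem ⟨t, ht⟩))
  have hmean : ∫ t, (t : ℝ) ∂μ = ω a := by
    rw [ω.integral_spectralMeasure_eq_cfc ha (f := fun t => t) continuousOn_id, cfc_id' ℝ a]
  calc f (ω a) = f (∫ t, (t : ℝ) ∂μ) := by rw [hmean]
    _ ≤ ∫ t, f t ∂μ :=
      (hconv.subset hIJ (convex_Icc _ _)).map_integral_le (hcont.mono hIJ) isClosed_Icc
        (ae_of_all _ fun t => hKI t.2)
        (continuous_subtype_val.integrable_of_hasCompactSupport (.of_compactSpace _))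
        ((hcont.mono hspec).domRestrict.integrable_of_hasCompactSupport (.of_compactSpace _))
    _ = ω (cfc f a) := ω.integral_spectralMeasure_eq_cfc ha (hcont.mono hspec)

noncomputable def ContinuousLinearMap.vectorFunctional (x : H) : (H →L[ℂ] H) →ₚ[ℝ] ℝ :=
  .mk₀
    { toFun T := (inner ℂ (T x) x).re
      map_add' S T := by simp only [add_apply, inner_add_left, Complex.add_re]
      map_smul' c T := by simp }
    fun T hT => ((nonneg_iff_isPositive T).mp hT).re_inner_nonneg_left x

/-- For a unital positive linear map `Φ`, self-adjoint `A` with spectrum in `J`,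
convex continuous `f` on `J` and a unit vector `x`: `f(⟪Φ(A)x,x⟫) ≤ ⟪Φ(f(A))x,x⟫`. -/
theorem convex_inner_phi (Φ : (H →L[ℂ] H) →ₗ[ℂ] (H →L[ℂ] H))
    (hpos : ∀ T : H →L[ℂ] H, 0 ≤ T → 0 ≤ Φ T) (hunital : Φ 1 = 1)
    (A : H →L[ℂ] H) (hA : IsSelfAdjoint A)
    (J : Set ℝ) (hspec : spectrum ℝ A ⊆ J)
    (f : ℝ → ℝ) (hconv : ConvexOn ℝ J f) (hcont : ContinuousOn f J)
    (x : H) (hx : ‖x‖ = 1) :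
    f ((inner ℂ ((Φ A) x) x : ℂ).re) ≤ (inner ℂ ((Φ (cfc f A)) x) x : ℂ).re := by
  let ω := (vectorFunctional x).comp (.mk₀ (Φ.restrictScalars ℝ) hpos)
  have hω : ω 1 = 1 := by
    change (inner ℂ (Φ 1 x) x).re = 1
    simp [hunital, inner_self_eq_norm_sq_to_K, hx]
  exact hconv.map_apply_le_apply_cfc hω hA hspec hcont
end

section
/- Let A be a bounded operator on a complex Hilbert space and r ≥ 1. Then w(A)^{2r} ≤ sup_{‖x‖=1} ∫₀¹ ‖(t|A|² + (1−t)|A*|²)^{1/2} x‖^{2r} dt ≤ (1/2)‖ |A|^{2r} + |A*|^{2r} ‖. -/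
/-!
For a unit vector `x` put `a = ‖A x‖²` and `b = ‖A* x‖²`. Then
`‖(t|A|² + (1-t)|A*|²)^{1/2} x‖² = t a + (1-t) b`, so the integral is `∫₀¹ (t a + (1-t) b)^r dt`.
By Cauchy–Schwarz `|⟪A x, x⟫|² ≤ min a b`, so the integrand dominates `|⟪A x, x⟫|^{2r}`.
By convexity of `s ↦ s^r` the integral is at most `(a^r + b^r)/2` (Hermite–Hadamard), and
McCarthy's inequality `⟪P x, x⟫^r ≤ ⟪P^r x, x⟫` for `P ≥ 0` bounds this by
`½ ⟪(|A|^{2r} + |A*|^{2r}) x, x⟫ ≤ ½ ‖|A|^{2r} + |A*|^{2r}‖`. Both inequalities survive taking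
suprema over `x`.
-/

open ContinuousLinearMap MeasureTheory

variable {H : Type*} [NormedAddCommGroup H] [InnerProductSpace ℂ H] [CompleteSpace H]

theorem Real.mul_rpow_sub_one_mul_le {r s c : ℝ} (hr : 1 ≤ r) (hs : 0 ≤ s) (hc : 0 ≤ c) :
    r * c ^ (r - 1) * s ≤ s ^ r + (r - 1) * c ^ r := by
  have hr0 : 0 < r := by linarith
  have h := Real.geom_mean_le_arith_mean2_weighted (w₁ := r⁻¹) (w₂ := 1 - r⁻¹)
    (p₁ := s ^ r) (p₂ := c ^ r) (by positivity) (sub_nonneg.2 (inv_le_one_of_one_le₀ hr))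
    (by positivity) (by positivity) (by ring)
  rw [Real.rpow_rpow_inv hs hr0.ne', ← Real.rpow_mul hc, mul_one_sub,
    mul_inv_cancel₀ hr0.ne'] at h
  have := mul_le_mul_of_nonneg_left h hr0.le
  field_simp at this
  linarith

theorem ConvexOn.intervalIntegral_le_add_div_two {E : Type*} [AddCommGroup E] [Module ℝ E]
    {s : Set E} {f : E → ℝ} (hf : ConvexOn ℝ s f) {a b : E} (ha : a ∈ s) (hb : b ∈ s)
    (hint : IntervalIntegrable (fun t : ℝ => f (t • a + (1 - t) • b)) volume 0 1) :
    ∫ t in (0 : ℝ)..1, f (t • a + (1 - t) • b) ≤ (f a + f b) / 2 := by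
  have hchord : ∀ t ∈ Set.Icc (0 : ℝ) 1, f (t • a + (1 - t) • b) ≤ t * f a + (1 - t) * f b :=
    fun t ht => hf.2 ha hb ht.1 (sub_nonneg.2 ht.2) (add_sub_cancel t 1)
  have hlin : (fun t : ℝ => t * f a + (1 - t) * f b) = fun t => (f a - f b) * t + f b := by
    ext; ring
  calc ∫ t in (0 : ℝ)..1, f (t • a + (1 - t) • b)
      ≤ ∫ t in (0 : ℝ)..1, (t * f a + (1 - t) * f b) :=
        intervalIntegral.integral_mono_on zero_le_one hint
          (Continuous.intervalIntegrable (by fun_prop) _ _) hchord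
    _ = (f a + f b) / 2 := by
        rw [hlin, intervalIntegral.integral_add (Continuous.intervalIntegrable (by fun_prop) _ _)
          intervalIntegrable_const, intervalIntegral.integral_const_mul, integral_id]
        norm_num
        ring

theorem Real.sSup_rpow_le_sSup_of_rpow_le {α : Type*} {P : α → Prop} {f g : α → ℝ} {p : ℝ}
    (hp : 0 < p) (hf : ∀ x, P x → 0 ≤ f x) (hfg : ∀ x, P x → f x ^ p ≤ g x)
    (hg : BddAbove {s | ∃ x, P x ∧ s = g x}) :
    sSup {s | ∃ x, P x ∧ s = f x} ^ p ≤ sSup {s | ∃ x, P x ∧ s = g x} := by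
  have hg0 : 0 ≤ sSup {s | ∃ x, P x ∧ s = g x} := by
    refine Real.sSup_nonneg ?_
    rintro _ ⟨x, hx, rfl⟩
    exact (Real.rpow_nonneg (hf x hx) p).trans (hfg x hx)
  have hf0 : 0 ≤ sSup {s | ∃ x, P x ∧ s = f x} := by
    refine Real.sSup_nonneg ?_
    rintro _ ⟨x, hx, rfl⟩
    exact hf x hx
  rw [← Real.le_rpow_inv_iff_of_pos hf0 hg0 hp]
  refine Real.sSup_le ?_ (Real.rpow_nonneg hg0 _)
  rintro _ ⟨x, hx, rfl⟩
  rw [Real.le_rpow_inv_iff_of_pos (hf x hx) hg0 hp]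
  exact (hfg x hx).trans (le_csSup hg ⟨x, hx, rfl⟩)

section

variable {E : Type*} [NormedAddCommGroup E] [InnerProductSpace ℂ E]

theorem ContinuousLinearMap.re_inner_le_re_inner_of_le_s14 {T U : E →L[ℂ] E} (h : T ≤ U) (x : E) :
    RCLike.re (inner ℂ (T x) x) ≤ RCLike.re (inner ℂ (U x) x) := by
  simpa [inner_sub_left] using ((le_def T U).1 h).re_inner_nonneg_left x

theorem ContinuousLinearMap.re_inner_le_norm_mul_sq (T : E →L[ℂ] E) (x : E) :
    RCLike.re (inner ℂ (T x) x) ≤ ‖T‖ * ‖x‖ ^ 2 :=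
  calc RCLike.re (inner ℂ (T x) x) ≤ ‖T x‖ * ‖x‖ :=
        (RCLike.re_le_norm _).trans (norm_inner_le_norm _ _)
    _ ≤ ‖T‖ * ‖x‖ * ‖x‖ := by gcongr; exact T.le_opNorm x
    _ = ‖T‖ * ‖x‖ ^ 2 := by ring

theorem ContinuousLinearMap.re_inner_real_smul_apply (c : ℝ) (T : E →L[ℂ] E) (x : E) :
    RCLike.re (inner ℂ ((c • T) x) x) = c * RCLike.re (inner ℂ (T x) x) := by
  simp

theorem ContinuousLinearMap.re_inner_add_apply (T U : E →L[ℂ] E) (x : E) :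
    RCLike.re (inner ℂ ((T + U) x) x) =
      RCLike.re (inner ℂ (T x) x) + RCLike.re (inner ℂ (U x) x) := by
  rw [add_apply, inner_add_left, map_add]

theorem ContinuousLinearMap.re_inner_algebraMap_apply (c : ℝ) (x : E) :
    RCLike.re (inner ℂ (algebraMap ℝ (E →L[ℂ] E) c x) x) = c * ‖x‖ ^ 2 := by
  simp [Algebra.algebraMap_eq_smul_one, ← Complex.ofReal_pow]

end

theorem ContinuousLinearMap.re_inner_adjoint_mul_self_apply (A : H →L[ℂ] H) (x : H) :
    RCLike.re (inner ℂ ((adjoint A * A) x) x) = ‖A x‖ ^ 2 :=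
  (apply_norm_sq_eq_inner_adjoint_left A x).symm

theorem ContinuousLinearMap.re_inner_mul_adjoint_self_apply (A : H →L[ℂ] H) (x : H) :
    RCLike.re (inner ℂ ((A * adjoint A) x) x) = ‖adjoint A x‖ ^ 2 := by
  simpa using re_inner_adjoint_mul_self_apply (adjoint A) x

theorem CFC.norm_sqrt_apply_sq {B : H →L[ℂ] H} (hB : 0 ≤ B) (x : H) :
    ‖CFC.sqrt B x‖ ^ 2 = RCLike.re (inner ℂ (B x) x) := by
  have hsqrt : adjoint (CFC.sqrt B) = CFC.sqrt B := by
    rw [← star_eq_adjoint]; exact (CFC.sqrt_nonneg B).isSelfAdjoint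
  rw [← re_inner_adjoint_mul_self_apply, hsqrt, CFC.sqrt_mul_sqrt_self B hB]

/-- McCarthy's inequality. The tangent line of `s ↦ s ^ r` at `φ = re ⟪B x, x⟫` lies below it on
the spectrum of `B`; the resulting operator inequality, evaluated at `x`, is the claim. -/
theorem ContinuousLinearMap.re_inner_rpow_le_re_inner_cfc_rpow {B : H →L[ℂ] H} (hB : 0 ≤ B)
    {x : H} (hx : ‖x‖ = 1) {r : ℝ} (hr : 1 ≤ r) :
    RCLike.re (inner ℂ (B x) x) ^ r ≤ RCLike.re (inner ℂ (cfc (fun s : ℝ => s ^ r) B x) x) := by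
  set φ := RCLike.re (inner ℂ (B x) x)
  have hφ : 0 ≤ φ := ((nonneg_iff_isPositive B).1 hB).re_inner_nonneg_left x
  have hrpow : Continuous fun s : ℝ => s ^ r := Real.continuous_rpow_const (by linarith)
  have hop : (r * φ ^ (r - 1)) • B ≤
      cfc (fun s : ℝ => s ^ r) B + algebraMap ℝ _ ((r - 1) * φ ^ r) := by
    rw [← cfc_const_mul_id _ B, ← cfc_add_const _ _ B]
    exact cfc_mono fun s hs =>
      Real.mul_rpow_sub_one_mul_le hr (spectrum_nonneg_of_nonneg hB hs) hφ
  have key := re_inner_le_re_inner_of_le_s14 hop x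
  rw [re_inner_add_apply, re_inner_real_smul_apply, re_inner_algebraMap_apply, hx, one_pow,
    mul_one, mul_assoc, ← Real.rpow_add_one' hφ (by linarith), sub_add_cancel] at key
  linarith

theorem norm_sqrt_convexComb_apply_sq (A : H →L[ℂ] H) {t : ℝ} (ht : t ∈ Set.Icc (0 : ℝ) 1)
    (x : H) :
    ‖CFC.sqrt (t • (adjoint A * A) + (1 - t) • (A * adjoint A)) x‖ ^ 2 =
      t * ‖A x‖ ^ 2 + (1 - t) * ‖adjoint A x‖ ^ 2 := by
  have hB : 0 ≤ t • (adjoint A * A) + (1 - t) • (A * adjoint A) :=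
    add_nonneg (smul_nonneg ht.1 (star_mul_self_nonneg A))
      (smul_nonneg (sub_nonneg.2 ht.2) (mul_star_self_nonneg A))
  rw [CFC.norm_sqrt_apply_sq hB, re_inner_add_apply, re_inner_real_smul_apply,
    re_inner_real_smul_apply, re_inner_adjoint_mul_self_apply, re_inner_mul_adjoint_self_apply]

theorem integral_norm_sqrt_convexComb_apply_rpow (A : H →L[ℂ] H) (r : ℝ) (x : H) :
    ∫ t in (0 : ℝ)..1,
        ‖CFC.sqrt (t • (adjoint A * A) + (1 - t) • (A * adjoint A)) x‖ ^ (2 * r) =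
      ∫ t in (0 : ℝ)..1, (t * ‖A x‖ ^ 2 + (1 - t) * ‖adjoint A x‖ ^ 2) ^ r := by
  refine intervalIntegral.integral_congr fun t ht => ?_
  rw [Set.uIcc_of_le zero_le_one] at ht
  rw [Real.rpow_mul (norm_nonneg _), Real.rpow_two, norm_sqrt_convexComb_apply_sq A ht]

theorem norm_inner_apply_self_rpow_le_integral (A : H →L[ℂ] H) {r : ℝ} (hr : 0 ≤ r) {x : H}
    (hx : ‖x‖ = 1) :
    ‖inner ℂ (A x) x‖ ^ (2 * r) ≤ ∫ t in (0 : ℝ)..1,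
        ‖CFC.sqrt (t • (adjoint A * A) + (1 - t) • (A * adjoint A)) x‖ ^ (2 * r) := by
  have hca : ‖inner ℂ (A x) x‖ ^ 2 ≤ ‖A x‖ ^ 2 := by
    gcongr
    simpa [hx] using norm_inner_le_norm (A x) x
  have hcb : ‖inner ℂ (A x) x‖ ^ 2 ≤ ‖adjoint A x‖ ^ 2 := by
    rw [← adjoint_inner_right]
    gcongr
    simpa [hx] using norm_inner_le_norm x (adjoint A x)
  have hcont : Continuous fun t : ℝ => (t * ‖A x‖ ^ 2 + (1 - t) * ‖adjoint A x‖ ^ 2) ^ r :=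
    (Real.continuous_rpow_const hr).comp (by fun_prop)
  rw [integral_norm_sqrt_convexComb_apply_rpow, Real.rpow_mul (norm_nonneg _), Real.rpow_two]
  calc (‖inner ℂ (A x) x‖ ^ 2) ^ r = ∫ _ in (0 : ℝ)..1, (‖inner ℂ (A x) x‖ ^ 2) ^ r := by simp
    _ ≤ _ := intervalIntegral.integral_mono_on zero_le_one intervalIntegrable_const
        (hcont.intervalIntegrable _ _) fun t ht =>
          Real.rpow_le_rpow (by positivity) (by nlinarith [ht.1, ht.2]) hr

theorem integral_norm_sqrt_convexComb_apply_rpow_le (A : H →L[ℂ] H) {r : ℝ} (hr : 1 ≤ r)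
    {x : H} (hx : ‖x‖ = 1) :
    ∫ t in (0 : ℝ)..1,
        ‖CFC.sqrt (t • (adjoint A * A) + (1 - t) • (A * adjoint A)) x‖ ^ (2 * r) ≤
      (1 / 2 : ℝ) * ‖cfc (fun s : ℝ => s ^ r) (adjoint A * A) +
        cfc (fun s : ℝ => s ^ r) (A * adjoint A)‖ := by
  have hS :=
    re_inner_rpow_le_re_inner_cfc_rpow (B := adjoint A * A) (star_mul_self_nonneg A) hx hr
  have hT :=
    re_inner_rpow_le_re_inner_cfc_rpow (B := A * adjoint A) (mul_star_self_nonneg A) hx hr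
  rw [re_inner_adjoint_mul_self_apply] at hS
  rw [re_inner_mul_adjoint_self_apply] at hT
  have hnorm := re_inner_le_norm_mul_sq
    (cfc (fun s : ℝ => s ^ r) (adjoint A * A) + cfc (fun s : ℝ => s ^ r) (A * adjoint A)) x
  rw [re_inner_add_apply, hx, one_pow, mul_one] at hnorm
  have hcont : Continuous fun t : ℝ => (t * ‖A x‖ ^ 2 + (1 - t) * ‖adjoint A x‖ ^ 2) ^ r :=
    (Real.continuous_rpow_const (by linarith)).comp (by fun_prop)
  have hHH := (convexOn_rpow hr).intervalIntegral_le_add_div_two (sq_nonneg ‖A x‖)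
    (sq_nonneg ‖adjoint A x‖) (hcont.intervalIntegrable _ _)
  simp only [smul_eq_mul] at hHH
  rw [integral_norm_sqrt_convexComb_apply_rpow]
  linarith

/-- For `r ≥ 1`:
`w(A)^{2r} ≤ sup_{‖x‖=1} ∫₀¹ ‖(t|A|² + (1-t)|A*|²)^{1/2} x‖^{2r} dt
  ≤ (1/2)‖|A|^{2r} + |A*|^{2r}‖`. -/
theorem numRadius_two_rpow (A : H →L[ℂ] H) (r : ℝ) (hr : 1 ≤ r) :
    numRadius A ^ (2 * r) ≤
      sSup {s : ℝ | ∃ x : H, ‖x‖ = 1 ∧ s = ∫ t in (0:ℝ)..1,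
        ‖CFC.sqrt (t • (adjoint A * A) + (1 - t) • (A * adjoint A)) x‖ ^ (2 * r)} ∧
    sSup {s : ℝ | ∃ x : H, ‖x‖ = 1 ∧ s = ∫ t in (0:ℝ)..1,
        ‖CFC.sqrt (t • (adjoint A * A) + (1 - t) • (A * adjoint A)) x‖ ^ (2 * r)} ≤
      (1 / 2 : ℝ) *
        ‖cfc (fun s : ℝ => s ^ r) (adjoint A * A) + cfc (fun s : ℝ => s ^ r) (A * adjoint A)‖ := by
  refine ⟨Real.sSup_rpow_le_sSup_of_rpow_le (by linarith) (fun _ _ => norm_nonneg _)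
      (fun x hx => norm_inner_apply_self_rpow_le_integral A (by linarith) hx) ⟨_, ?bound⟩,
    Real.sSup_le ?bound (by positivity)⟩
  rintro _ ⟨x, hx, rfl⟩
  exact integral_norm_sqrt_convexComb_apply_rpow_le A hr hx
end
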